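/- Let G be the graph consisting of an even cycle C = v_1 ... v_k (k ≥ 4 even) together with, for each vertex v_i with 2 ≤ i ≤ k, one triangle complete to v_i, and for v_1, two disjoint triangles each complete to v_1, all triangles pairwise anticomplete and anticomplete to C except via their designated cycle vertex. Then G is not a contact B0-VPG graph. -/

import Mathlib

/-!
In a contact representation the four segments of a `K₄` share a point that is an endpoint of
each of them: two are horizontal and two vertical, and parallel touching segments meet only in
a common endpoint. Hence every triangle pins an endpoint of the segment of its cycle vertex at a
point that no other segment reaches, and the vertex with two triangles has both endpoints pinned.
Each cycle edge `vᵢvᵢ₊₁` is realised by a contact point that is a free endpoint of one of the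
two segments; charging the edge to that segment maps the `k` edges injectively to the `k` cycle
vertices (two edges charged to one segment would share its only free endpoint, so their three
or four vertices would be pairwise adjacent, which a hole forbids), yet misses the vertex with
two triangles.
-/

/-- An axis-parallel nontrivial segment on the grid: `horiz` tells its direction,
`coord` is the fixed coordinate (the `y`-coordinate if horizontal, the `x`-coordinate
if vertical) and `[lo, hi]` (with `lo < hi`, i.e. the segment is nontrivial) is the
interval spanned by the varying coordinate. -/
structure GridSeg where
  horiz : Bool
  coord : ℤ
  lo : ℤ
  hi : ℤ
  lt : lo < hi

namespace GridSeg

/-- The set of points (in the real plane) of a grid segment. -/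
def pts (s : GridSeg) : Set (ℝ × ℝ) :=
  if s.horiz then {p | p.2 = (s.coord : ℝ) ∧ (s.lo : ℝ) ≤ p.1 ∧ p.1 ≤ (s.hi : ℝ)}
  else {p | p.1 = (s.coord : ℝ) ∧ (s.lo : ℝ) ≤ p.2 ∧ p.2 ≤ (s.hi : ℝ)}

/-- The interior of a grid segment. -/
def interior (s : GridSeg) : Set (ℝ × ℝ) :=
  if s.horiz then {p | p.2 = (s.coord : ℝ) ∧ (s.lo : ℝ) < p.1 ∧ p.1 < (s.hi : ℝ)}
  else {p | p.1 = (s.coord : ℝ) ∧ (s.lo : ℝ) < p.2 ∧ p.2 < (s.hi : ℝ)}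

/-- The two endpoints of a grid segment. -/
def ends (s : GridSeg) : Set (ℝ × ℝ) :=
  if s.horiz then {((s.lo : ℝ), (s.coord : ℝ)), ((s.hi : ℝ), (s.coord : ℝ))}
  else {((s.coord : ℝ), (s.lo : ℝ)), ((s.coord : ℝ), (s.hi : ℝ))}

/-- Two segments touch if they share a point which is an endpoint of at least
one of the two segments. -/
def Touch (s t : GridSeg) : Prop :=
  ∃ p : ℝ × ℝ, p ∈ s.pts ∧ p ∈ t.pts ∧ (p ∈ s.ends ∨ p ∈ t.ends)

end GridSeg

/-- `f` is a contact B₀-VPG representation of `G`: the segments of distinct vertices are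
interiorly disjoint, and two distinct vertices are adjacent iff their segments touch. -/
def IsB0Rep {V : Type*} (G : SimpleGraph V) (f : V → GridSeg) : Prop :=
  (∀ v w : V, v ≠ w → Disjoint (GridSeg.interior (f v)) (GridSeg.interior (f w))) ∧
  (∀ v w : V, v ≠ w → (G.Adj v w ↔ GridSeg.Touch (f v) (f w)))

/-- A graph is contact B₀-VPG if it admits a contact B₀-VPG representation. -/
def ContactB0VPG {V : Type*} (G : SimpleGraph V) : Prop :=
  ∃ f : V → GridSeg, IsB0Rep G f

/-- Cyclic shift: the element `i + m (mod k)` of `Fin k`. -/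
def cycShift {k : ℕ} (i : Fin k) (m : ℕ) : Fin k :=
  i + ⟨m % k, Nat.mod_lt m (Nat.lt_of_le_of_lt (Nat.zero_le i.1) i.isLt)⟩

/-- `c` lists the vertices of an induced cycle (a hole, when `k ≥ 4`) of `G`, in cyclic
order: `c` is injective and two of its vertices are adjacent iff they are consecutive. -/
def IsInducedCycle {V : Type*} (G : SimpleGraph V) {k : ℕ} (c : Fin k → V) : Prop :=
  Function.Injective c ∧
    ∀ i j : Fin k, G.Adj (c i) (c j) ↔ (i ≠ j ∧ (i = cycShift j 1 ∨ j = cycShift i 1))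

/-- The graph made of a `k`-cycle `v_1 … v_k` together with, for each `i`, `t i` pairwise
anticomplete triangles complete to `v_i` (and anticomplete to the rest of the graph).
Vertices: `Sum.inl i` is the cycle vertex `v_i`; `Sum.inr ⟨i, a, x⟩` is the `x`-th vertex
of the `a`-th triangle attached to `v_i`. -/
def cycleWithTriangles (k : ℕ) (t : Fin k → ℕ) :
    SimpleGraph (Fin k ⊕ Σ i : Fin k, Fin (t i) × Fin 3) where
  Adj a b :=
    match a, b with
    | Sum.inl i, Sum.inl j => i ≠ j ∧ (i = cycShift j 1 ∨ j = cycShift i 1)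
    | Sum.inl i, Sum.inr x => i = x.1
    | Sum.inr x, Sum.inl i => i = x.1
    | Sum.inr x, Sum.inr y => x.1 = y.1 ∧ x.2.1.1 = y.2.1.1 ∧ x.2.2 ≠ y.2.2
  symm := by
    constructor
    rintro (i | x) (j | y) h
    · exact ⟨h.1.symm, h.2.symm⟩
    · exact h
    · exact h
    · exact ⟨h.1.symm, h.2.1.symm, h.2.2.symm⟩
  loopless := by
    constructor
    rintro (i | x) h
    · exact h.1 rfl
    · exact h.2.2 rfl

namespace GridSeg

/-- The point at position `x` along and `y` across a line of direction `b`. -/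
def pointAt (b : Bool) (x y : ℝ) : ℝ × ℝ := if b then (x, y) else (y, x)

theorem pointAt_inj {b : Bool} {x y x' y' : ℝ} :
    pointAt b x y = pointAt b x' y' ↔ x = x' ∧ y = y' := by
  cases b <;> simp [pointAt, and_comm]

theorem pointAt_not (b : Bool) (x y : ℝ) : pointAt (!b) x y = pointAt b y x := by
  cases b <;> rfl

variable {s t u w : GridSeg} {p q p' : ℝ × ℝ}

theorem mem_pts :
    p ∈ s.pts ↔ ∃ x : ℝ, s.lo ≤ x ∧ x ≤ s.hi ∧ p = pointAt s.horiz x s.coord := by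
  obtain ⟨x, y⟩ := p
  cases h : s.horiz <;> simp [h, pts, pointAt, and_comm, and_assoc]

theorem mem_interior :
    p ∈ s.interior ↔ ∃ x : ℝ, s.lo < x ∧ x < s.hi ∧ p = pointAt s.horiz x s.coord := by
  obtain ⟨x, y⟩ := p
  cases h : s.horiz <;> simp [h, interior, pointAt, and_comm, and_assoc]

theorem mem_ends :
    p ∈ s.ends ↔ p = pointAt s.horiz s.lo s.coord ∨ p = pointAt s.horiz s.hi s.coord := by
  cases h : s.horiz <;> simp [h, ends, pointAt]

theorem ends_subset_pts (s : GridSeg) : s.ends ⊆ s.pts := by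
  have : (s.lo : ℝ) ≤ s.hi := by exact_mod_cast s.lt.le
  rintro p hp
  rcases mem_ends.mp hp with rfl | rfl
  exacts [mem_pts.mpr ⟨_, le_rfl, this, rfl⟩, mem_pts.mpr ⟨_, this, le_rfl, rfl⟩]

theorem mem_interior_or_mem_ends (hp : p ∈ s.pts) : p ∈ s.interior ∨ p ∈ s.ends := by
  obtain ⟨x, hlo, hhi, rfl⟩ := mem_pts.mp hp
  rcases hlo.eq_or_lt with rfl | hlo
  · exact .inr (mem_ends.mpr (.inl rfl))
  rcases hhi.eq_or_lt with rfl | hhi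
  · exact .inr (mem_ends.mpr (.inr rfl))
  exact .inl (mem_interior.mpr ⟨x, hlo, hhi, rfl⟩)

theorem touch_of_mem_pts (hd : Disjoint s.interior t.interior) (hs : p ∈ s.pts)
    (ht : p ∈ t.pts) : s.Touch t := by
  refine ⟨p, hs, ht, ?_⟩
  rcases mem_interior_or_mem_ends hs with hs' | hs'
  · rcases mem_interior_or_mem_ends ht with ht' | ht'
    · exact (Set.disjoint_left.mp hd hs' ht').elim
    · exact .inr ht'
  · exact .inl hs'

theorem eq_or_eq_of_mem_ends (hp : p ∈ s.ends) (hp' : p' ∈ s.ends) (hne : p ≠ p')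
    (hq : q ∈ s.ends) : q = p ∨ q = p' := by
  rw [mem_ends] at hp hp' hq
  rcases hp with rfl | rfl <;> rcases hp' with rfl | rfl <;> tauto

theorem coord_eq_and_abut_of_touch (h : s.horiz = t.horiz)
    (hd : Disjoint s.interior t.interior) (hst : s.Touch t) :
    s.coord = t.coord ∧ (s.hi = t.lo ∨ t.hi = s.lo) := by
  obtain ⟨p, hs, ht, -⟩ := hst
  obtain ⟨x, hsx, hxs, rfl⟩ := mem_pts.mp hs
  obtain ⟨x', htx, hxt, hp⟩ := mem_pts.mp ht
  rw [h, pointAt_inj] at hp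
  obtain ⟨rfl, hc⟩ := hp
  have hc : s.coord = t.coord := by exact_mod_cast hc
  refine ⟨hc, ?_⟩
  by_contra habut
  have hoverlap : max s.lo t.lo < min s.hi t.hi := by
    have := s.lt; have := t.lt
    have : s.lo ≤ t.hi := by exact_mod_cast hsx.trans hxt
    have : t.lo ≤ s.hi := by exact_mod_cast htx.trans hxs
    omega
  have hoverlap' : max (s.lo : ℝ) t.lo < min (s.hi : ℝ) t.hi := by exact_mod_cast hoverlap
  have := le_max_left (s.lo : ℝ) t.lo; have := le_max_right (s.lo : ℝ) t.lo
  have := min_le_left (s.hi : ℝ) t.hi; have := min_le_right (s.hi : ℝ) t.hi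
  refine Set.disjoint_left.mp hd
    (mem_interior.mpr ⟨(max (s.lo : ℝ) t.lo + min (s.hi : ℝ) t.hi) / 2, ?_, ?_, rfl⟩)
    (mem_interior.mpr ⟨_, ?_, ?_, by rw [h, hc]⟩) <;> linarith

theorem mem_ends_of_mem_pts_of_horiz_eq (h : s.horiz = t.horiz)
    (hd : Disjoint s.interior t.interior) (hs : p ∈ s.pts) (ht : p ∈ t.pts) :
    p ∈ s.ends ∧ p ∈ t.ends := by
  obtain ⟨hc, habut⟩ := coord_eq_and_abut_of_touch h hd (touch_of_mem_pts hd hs ht)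
  obtain ⟨x, hsx, hxs, rfl⟩ := mem_pts.mp hs
  obtain ⟨x', htx, hxt, hp⟩ := mem_pts.mp ht
  obtain ⟨rfl, -⟩ := pointAt_inj.mp (h ▸ hp)
  simp only [mem_ends, h, hc, pointAt_inj, and_true]
  rcases habut with habut | habut
  · have : x = s.hi := le_antisymm hxs (habut ▸ htx)
    exact ⟨.inr this, .inl (habut ▸ this)⟩
  · have : x = s.lo := le_antisymm (habut ▸ hxt) hsx
    exact ⟨.inl this, .inr (habut ▸ this)⟩

theorem eq_pointAt_of_mem_pts_of_horiz_ne (h : s.horiz ≠ t.horiz) (hs : p ∈ s.pts)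
    (ht : p ∈ t.pts) : p = pointAt s.horiz t.coord s.coord := by
  obtain ⟨x, -, -, rfl⟩ := mem_pts.mp hs
  obtain ⟨y, -, -, hp⟩ := mem_pts.mp ht
  rw [Bool.eq_not.mpr h.symm, pointAt_not, pointAt_inj] at hp
  rw [hp.1]

theorem not_three_pairwise_touch_of_horiz_eq (hst : s.horiz = t.horiz) (hsu : s.horiz = u.horiz)
    (dst : Disjoint s.interior t.interior) (dsu : Disjoint s.interior u.interior)
    (dtu : Disjoint t.interior u.interior) (tst : s.Touch t) (tsu : s.Touch u)
    (ttu : t.Touch u) : False := by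
  have := (coord_eq_and_abut_of_touch hst dst tst).2
  have := (coord_eq_and_abut_of_touch hsu dsu tsu).2
  have := (coord_eq_and_abut_of_touch (hst ▸ hsu) dtu ttu).2
  have := s.lt; have := t.lt; have := u.lt
  omega

theorem exists_mem_ends_of_parallel_pairs (hst : s.horiz = t.horiz) (huw : u.horiz = w.horiz)
    (hsu : s.horiz ≠ u.horiz) (dst : Disjoint s.interior t.interior)
    (duw : Disjoint u.interior w.interior) (tst : s.Touch t) (tuw : u.Touch w)
    (tsu : s.Touch u) (ttw : t.Touch w) :
    ∃ p, p ∈ s.ends ∧ p ∈ t.ends ∧ p ∈ u.ends ∧ p ∈ w.ends := by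
  -- all four segments pass through the crossing point of `s` and `u`
  have hcst := (coord_eq_and_abut_of_touch hst dst tst).1
  have hcuw := (coord_eq_and_abut_of_touch huw duw tuw).1
  obtain ⟨p, hps, hpu, -⟩ := tsu
  obtain ⟨p', hpt, hpw, -⟩ := ttw
  have hp := eq_pointAt_of_mem_pts_of_horiz_ne hsu hps hpu
  have hp' := eq_pointAt_of_mem_pts_of_horiz_ne (hst ▸ huw ▸ hsu) hpt hpw
  rw [← hst, ← hcst, ← hcuw, ← hp] at hp'
  rw [hp'] at hpt hpw
  obtain ⟨hs, ht⟩ := mem_ends_of_mem_pts_of_horiz_eq hst dst hps hpt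
  obtain ⟨hu, hw⟩ := mem_ends_of_mem_pts_of_horiz_eq huw duw hpu hpw
  exact ⟨p, hs, ht, hu, hw⟩

theorem exists_forall_mem_ends_of_pairwise (s : Fin 4 → GridSeg)
    (hd : Pairwise fun i j => Disjoint (s i).interior (s j).interior)
    (ht : Pairwise fun i j => (s i).Touch (s j)) : ∃ p, ∀ i, p ∈ (s i).ends := by
  have no3 : ∀ i j l, i ≠ j → i ≠ l → j ≠ l → (s i).horiz = (s j).horiz →
      (s i).horiz ≠ (s l).horiz := fun i j l hij hil hjl h h' =>
    not_three_pairwise_touch_of_horiz_eq h h' (hd hij) (hd hil) (hd hjl) (ht hij) (ht hil) (ht hjl)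
  have eq_of_ne_of_ne {a b c : Bool} (ha : a ≠ c) (hb : b ≠ c) : a = b :=
    (Bool.eq_not.mpr ha).trans (Bool.eq_not.mpr hb).symm
  suffices ∃ a b u w : Fin 4, (∀ i, i = a ∨ i = b ∨ i = u ∨ i = w) ∧ a ≠ b ∧ u ≠ w ∧ a ≠ u ∧
      b ≠ w ∧ (s a).horiz = (s b).horiz ∧ (s u).horiz = (s w).horiz ∧ (s a).horiz ≠ (s u).horiz by
    obtain ⟨a, b, u, w, hcover, hab, huw, hau, hbw, hsab, hsuw, hsau⟩ := this
    obtain ⟨p, hp⟩ := exists_mem_ends_of_parallel_pairs hsab hsuw hsau (hd hab) (hd huw)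
      (ht hab) (ht huw) (ht hau) (ht hbw)
    exact ⟨p, fun i => by rcases hcover i with rfl | rfl | rfl | rfl <;> simp [hp]⟩
  by_cases h01 : (s 0).horiz = (s 1).horiz
  · have h02 := no3 0 1 2 (by decide) (by decide) (by decide) h01
    have h03 := no3 0 1 3 (by decide) (by decide) (by decide) h01
    exact ⟨0, 1, 2, 3, by decide, by decide, by decide, by decide, by decide, h01,
      eq_of_ne_of_ne h02.symm h03.symm, h02⟩
  by_cases h02 : (s 0).horiz = (s 2).horiz
  · have h03 := no3 0 2 3 (by decide) (by decide) (by decide) h02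
    exact ⟨0, 2, 1, 3, by decide, by decide, by decide, by decide, by decide, h02,
      eq_of_ne_of_ne (Ne.symm h01) h03.symm, h01⟩
  by_cases h03 : (s 0).horiz = (s 3).horiz
  · exact ⟨0, 3, 1, 2, by decide, by decide, by decide, by decide, by decide, h03,
      eq_of_ne_of_ne (Ne.symm h01) (Ne.symm h02), h01⟩
  exact (no3 1 2 3 (by decide) (by decide) (by decide) (eq_of_ne_of_ne (Ne.symm h01)
    (Ne.symm h02)) (eq_of_ne_of_ne (Ne.symm h01) (Ne.symm h03))).elim

end GridSeg

namespace IsB0Rep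

variable {V : Type*} {G : SimpleGraph V} {f : V → GridSeg} {v w : V} {p : ℝ × ℝ}

theorem touch (hf : IsB0Rep G f) (h : G.Adj v w) : (f v).Touch (f w) :=
  (hf.2 v w h.ne).mp h

theorem adj_of_mem_pts (hf : IsB0Rep G f) (hvw : v ≠ w) (hv : p ∈ (f v).pts)
    (hw : p ∈ (f w).pts) : G.Adj v w :=
  (hf.2 v w hvw).mpr (GridSeg.touch_of_mem_pts (hf.1 v w hvw) hv hw)

theorem exists_forall_mem_ends (hf : IsB0Rep G f) (c : Fin 4 → V)
    (hc : Pairwise fun i j => G.Adj (c i) (c j)) : ∃ p, ∀ i, p ∈ (f (c i)).ends :=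
  GridSeg.exists_forall_mem_ends_of_pairwise (f ∘ c) (fun _ _ hij => hf.1 _ _ (hc hij).ne)
    (fun _ _ hij => hf.touch (hc hij))

end IsB0Rep

theorem val_cycShift_one_cases {k : ℕ} (i : Fin k) :
    (cycShift i 1).val = i.val + 1 ∧ i.val + 1 < k ∨ (cycShift i 1).val = 0 ∧ i.val + 1 = k := by
  have hi := i.isLt
  simp only [cycShift, Fin.val_add, Nat.add_mod_mod]
  rcases (Nat.add_one_le_of_lt hi).lt_or_eq with h | h
  · exact .inl ⟨Nat.mod_eq_of_lt h, h⟩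
  · exact .inr ⟨by rw [h, Nat.mod_self], h⟩

theorem cycShift_one_ne_self {k : ℕ} (hk : 2 ≤ k) (i : Fin k) : cycShift i 1 ≠ i := by
  have := val_cycShift_one_cases i
  have := i.isLt
  rw [ne_eq, Fin.ext_iff]
  omega

theorem eq_of_cycShift_mem_clique {k : ℕ} (hk : 4 ≤ k) {S : Set (Fin k)}
    (hS : ∀ m ∈ S, ∀ n ∈ S, m ≠ n → m = cycShift n 1 ∨ n = cycShift m 1) {i j : Fin k}
    (hi : i ∈ S) (hi' : cycShift i 1 ∈ S) (hj : j ∈ S) (hj' : cycShift j 1 ∈ S) : i = j := by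
  have h₁ := hS i hi j hj
  have h₂ := hS i hi _ hj'
  have h₃ := hS _ hi' j hj
  have := val_cycShift_one_cases i; have := val_cycShift_one_cases j
  have := val_cycShift_one_cases (cycShift i 1); have := val_cycShift_one_cases (cycShift j 1)
  have := i.isLt; have := j.isLt
  simp only [ne_eq, Fin.ext_iff] at h₁ h₂ h₃ ⊢
  omega

section cycleWithTriangles

variable {k : ℕ} {t : Fin k → ℕ} {f : Fin k ⊕ (Σ i : Fin k, Fin (t i) × Fin 3) → GridSeg}

theorem cycleWithTriangles_adj_cycShift (hk : 2 ≤ k) (i : Fin k) :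
    (cycleWithTriangles k t).Adj (.inl i) (.inl (cycShift i 1)) :=
  ⟨(cycShift_one_ne_self hk i).symm, .inr rfl⟩

theorem IsB0Rep.exists_mem_ends_triangle (hf : IsB0Rep (cycleWithTriangles k t) f) (i : Fin k)
    (a : Fin (t i)) : ∃ p, p ∈ (f (.inl i)).ends ∧ p ∈ (f (.inr ⟨i, a, 0⟩)).ends := by
  obtain ⟨p, hp⟩ := hf.exists_forall_mem_ends
    ![.inl i, .inr ⟨i, a, 0⟩, .inr ⟨i, a, 1⟩, .inr ⟨i, a, 2⟩] (by
      intro x y hxy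
      fin_cases x <;> fin_cases y <;> simp_all [cycleWithTriangles])
  exact ⟨p, hp 0, hp 1⟩

theorem IsB0Rep.not_mem_pts_cycShift (hf : IsB0Rep (cycleWithTriangles k t) f) (hk : 2 ≤ k)
    {x : Σ i : Fin k, Fin (t i) × Fin 3} {i : Fin k} {p : ℝ × ℝ} (hx : p ∈ (f (.inr x)).pts)
    (hi : p ∈ (f (.inl i)).pts) : p ∉ (f (.inl (cycShift i 1))).pts := fun hi' =>
  have h : i = x.1 := hf.adj_of_mem_pts Sum.inr_ne_inl hx hi
  have h' : cycShift i 1 = x.1 := hf.adj_of_mem_pts Sum.inr_ne_inl hx hi'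
  cycShift_one_ne_self hk i (h'.trans h.symm)

theorem IsB0Rep.eq_of_mem_pts_triangle (hf : IsB0Rep (cycleWithTriangles k t) f) {i : Fin k}
    {a b : Fin (t i)} {p : ℝ × ℝ} (ha : p ∈ (f (.inr ⟨i, a, 0⟩)).pts)
    (hb : p ∈ (f (.inr ⟨i, b, 0⟩)).pts) : a = b := by
  by_contra hab
  exact (hf.adj_of_mem_pts (by simpa using hab) ha hb).2.2 rfl

theorem cycleWithTriangles_not_contactB0VPG (hk : 4 ≤ k) (ht : ∀ i, 0 < t i) (i₀ : Fin k)
    (ht₀ : 1 < t i₀) : ¬ ContactB0VPG (cycleWithTriangles k t) := by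
  rintro ⟨f, hf⟩
  choose P hPv hPw using hf.exists_mem_ends_triangle
  choose q hq hq' hqe using fun i => hf.touch (cycleWithTriangles_adj_cycShift (by omega) i)
  have hqP : ∀ i j a, q i ≠ P j a := fun i j a h =>
    hf.not_mem_pts_cycShift (by omega) (h ▸ GridSeg.ends_subset_pts _ (hPw j a)) (hq i) (hq' i)
  have hqe' : ∀ i, ∃ j, q i ∈ (f (.inl j)).ends := fun i => (hqe i).elim (⟨_, ·⟩) (⟨_, ·⟩)
  choose g hg using hqe'
  have hg₀ : ∀ i, g i ≠ i₀ := by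
    rintro i rfl
    have hne : P (g i) ⟨0, by omega⟩ ≠ P (g i) ⟨1, ht₀⟩ := fun h => absurd
      (hf.eq_of_mem_pts_triangle (GridSeg.ends_subset_pts _ (hPw _ _))
        (h ▸ GridSeg.ends_subset_pts _ (hPw _ _))) (by simp)
    rcases GridSeg.eq_or_eq_of_mem_ends (hPv _ _) (hPv _ _) hne (hg i) with h | h <;>
      exact hqP _ _ _ h
  have hg_inj : g.Injective := by
    intro i j hij
    have hqq : q i = q j :=
      (GridSeg.eq_or_eq_of_mem_ends (hPv (g i) ⟨0, ht _⟩) (hij ▸ hg j) (hqP j _ _).symm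
        (hg i)).resolve_left (hqP i _ _)
    exact eq_of_cycShift_mem_clique hk (S := {m | q i ∈ (f (.inl m)).pts})
      (fun m hm n hn hmn => (hf.adj_of_mem_pts (Sum.inl_injective.ne hmn) hm hn).2)
      (hq i) (hq' i) (hqq ▸ hq j) (hqq ▸ hq' j)
  obtain ⟨i, hi⟩ := Finite.injective_iff_surjective.mp hg_inj i₀
  exact hg₀ i hi

end cycleWithTriangles

theorem F2_not_contactB0VPG_general (k : ℕ) (hk : 4 ≤ k) :
    ¬ ContactB0VPG (cycleWithTriangles k (fun i => if i.1 = 0 then 2 else 1)) :=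
  cycleWithTriangles_not_contactB0VPG hk (fun i => by split_ifs <;> omega) ⟨0, by omega⟩ (by simp)

/-- family `F₂`: an even cycle `v_1 … v_k` (`k ≥ 4`) where `v_1` carries two
disjoint triangles complete to it (Type 4) and every other cycle vertex carries one
triangle complete to it (Type 1), triangles pairwise anticomplete, is not contact B₀-VPG. -/
theorem F2_not_contactB0VPG (k : ℕ) (hk : 4 ≤ k) (hke : Even k) :
    ¬ ContactB0VPG (cycleWithTriangles k (fun i => if i.1 = 0 then 2 else 1)) :=
  F2_not_contactB0VPG_general k hk
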